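/- arXiv:2306.11815 — 6 statements merged into one kernel-verified Lean document; each statement's English description precedes it below -/
import Mathlib

section
/- Let p be a prime and a an integer with p not dividing a. Then the p-adic valuation of a^(p-1) - 1 equals the p-adic valuation of a^(p^m - 1) - 1 for every positive integer m. -/
/-!
By Fermat, `b := a ^ (p - 1)` is `1` modulo `p`, and `p ^ m - 1 = (p - 1) * k` with `k ≡ 1 [MOD p]`.
So `a ^ (p ^ m - 1) - 1 = b ^ k - 1 = (b - 1) * (1 + b + ⋯ + b ^ (k - 1))`, and the second factor
is `≡ k ≢ 0 [ZMOD p]`: raising `b` to a power prime to `p` does not change the `p`-adic valuation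
of `b - 1`.
-/

theorem padicValInt_eq_toNat_emultiplicity (p : ℕ) (z : ℤ) :
    padicValInt p z = (emultiplicity (p : ℤ) z).toNat := by
  rw [padicValInt, ← Nat.toNat_emultiplicity, Int.emultiplicity_natAbs]

theorem padicValInt_pow_sub_one_of_not_dvd {p : ℕ} (hp : p.Prime) {b : ℤ} (hb : (p : ℤ) ∣ b - 1)
    {n : ℕ} (hn : ¬p ∣ n) : padicValInt p (b ^ n - 1) = padicValInt p (b - 1) := by
  have hp' : Prime (p : ℤ) := Nat.prime_iff_prime_int.mp hp
  have hb' : ¬(p : ℤ) ∣ b := fun h ↦ hp'.not_dvd_one ((dvd_sub_right h).mp hb)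
  have hn' : ¬(p : ℤ) ∣ (n : ℤ) := by exact_mod_cast hn
  rw [padicValInt_eq_toNat_emultiplicity, padicValInt_eq_toNat_emultiplicity,
    ← emultiplicity_pow_sub_pow_of_prime hp' (y := 1) (by simpa using hb) hb' hn', one_pow]

theorem exists_pow_sub_one_eq_mul_not_dvd {p : ℕ} (hp : 1 < p) {m : ℕ} (hm : m ≠ 0) :
    ∃ k, p ^ m - 1 = (p - 1) * k ∧ ¬p ∣ k := by
  obtain ⟨k, hk⟩ := by simpa only [one_pow] using Nat.sub_dvd_pow_sub_pow p 1 m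
  refine ⟨k, hk, fun hpk ↦ hp.ne' (Nat.dvd_one.mp ?_)⟩
  have hpm : p ∣ p ^ m := dvd_pow_self p hm
  have hpm1 : p ∣ p ^ m - 1 := hk ▸ hpk.mul_left _
  have h1 : 1 ≤ p ^ m := Nat.one_le_pow _ _ (by omega)
  simpa [Nat.sub_sub_self h1] using Nat.dvd_sub hpm hpm1

theorem stmt0 (p : ℕ) (hp : p.Prime) (a : ℤ) (ha : ¬ (p : ℤ) ∣ a)
    (m : ℕ) (hm : 1 ≤ m) :
    padicValInt p (a ^ (p - 1) - 1) = padicValInt p (a ^ (p ^ m - 1) - 1) := by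
  have hfermat : (p : ℤ) ∣ a ^ (p - 1) - 1 := Int.prime_dvd_pow_sub_one hp
    ((Nat.prime_iff_prime_int.mp hp).coprime_iff_not_dvd.mpr ha).symm
  obtain ⟨k, hk, hpk⟩ := exists_pow_sub_one_eq_mul_not_dvd hp.one_lt (by omega : m ≠ 0)
  rw [hk, pow_mul, padicValInt_pow_sub_one_of_not_dvd hp hfermat hpk]
end

section
/- Let p be a prime and a an integer with a^p ≢ a (mod p^2). Then for every positive integer n, a^(p^n) ≢ a (mod p^2). -/
/-!
By Fermat, `b := a ^ p ^ (n - 1)` is congruent to `a` modulo `p`, and raising a congruence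
modulo `p` to the `p`-th power lifts it to one modulo `p ^ 2`. Hence
`a ^ p ^ n = b ^ p ≡ a ^ p [ZMOD p ^ 2]`, so `a ^ p ^ n - a` and `a ^ p - a` are divisible by
`p ^ 2` together.
-/

namespace Int

variable {p : ℕ}

theorem pow_prime_pow_modEq (hp : p.Prime) (a : ℤ) (m : ℕ) : a ^ p ^ m ≡ a [ZMOD p] := by
  have := Fact.mk hp
  rw [← ZMod.intCast_eq_intCast_iff, Int.cast_pow, ZMod.pow_card_pow]

theorem pow_prime_pow_succ_modEq_pow_prime (hp : p.Prime) (a : ℤ) (m : ℕ) :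
    a ^ p ^ (m + 1) ≡ a ^ p [ZMOD p ^ 2] := by
  have hb : (p : ℤ) ∣ a ^ p ^ m - a := (pow_prime_pow_modEq hp a m).symm.dvd
  have hlift : (p : ℤ) ^ 2 ∣ (a ^ p ^ m) ^ p - a ^ p := by
    simpa using dvd_sub_pow_of_dvd_sub hb 1
  rw [pow_succ p m, pow_mul]
  exact (Int.modEq_iff_dvd.mpr hlift).symm

end Int

theorem stmt2 (p : ℕ) (hp : p.Prime) (a : ℤ) (ha : ¬ ((p : ℤ) ^ 2 ∣ a ^ p - a))
    (n : ℕ) (hn : 1 ≤ n) :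
    ¬ ((p : ℤ) ^ 2 ∣ a ^ (p ^ n) - a) := by
  obtain ⟨m, rfl⟩ := Nat.exists_eq_add_of_le' hn
  intro h
  have hlift := Int.pow_prime_pow_succ_modEq_pow_prime hp a m
  exact ha (Int.modEq_iff_dvd.mp ((Int.modEq_iff_dvd.mpr h).trans hlift))
end

section
/- Let p be a prime and a an integer with p ∣ a and p^2 ∤ a. Define f(x) = x^p - a and let f^n denote the n-fold composition of f with itself. Then for every n ≥ 1, the p-adic valuation of f^n(0) equals the p-adic valuation of a, i.e. v_p(f^n(0)) = 1. -/
/-!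
Every iterate `f^[m] 0` is divisible by `p`, hence its `p`-th power by `p ^ 2` (as `p ≥ 2`).
So `f^[m + 1] 0 = (f^[m] 0) ^ p - a ≡ -a (mod p ^ 2)`, which is divisible by `p` but not by `p ^ 2`.
-/

theorem padicValInt_eq_of_dvd_of_not_dvd {p k : ℕ} (hp : p ≠ 1) {z : ℤ} (hk : (p : ℤ) ^ k ∣ z)
    (hsucc : ¬(p : ℤ) ^ (k + 1) ∣ z) : padicValInt p z = k := by
  have hz : z ≠ 0 := by rintro rfl; exact hsucc (dvd_zero _)
  rw [padicValInt.of_ne_one_ne_zero hp hz, multiplicity_eq_of_dvd_of_not_dvd hk hsucc]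

section PowSub

variable {R : Type*} [CommRing R] {q x a : R} {k : ℕ}

theorem dvd_pow_sub (hk : k ≠ 0) (hx : q ∣ x) (ha : q ∣ a) : q ∣ x ^ k - a :=
  dvd_sub (hx.trans (dvd_pow_self x hk)) ha

theorem not_sq_dvd_pow_sub (hk : 2 ≤ k) (hx : q ∣ x) (ha : ¬q ^ 2 ∣ a) : ¬q ^ 2 ∣ x ^ k - a := by
  intro h
  have hxk : q ^ 2 ∣ x ^ k := (pow_dvd_pow_of_dvd hx 2).trans (pow_dvd_pow x hk)
  exact ha (by simpa using dvd_sub hxk h)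

end PowSub

theorem stmt3 (p : ℕ) (hp : p.Prime) (a : ℤ) (hpa : (p : ℤ) ∣ a)
    (hp2a : ¬ ((p : ℤ) ^ 2 ∣ a))
    (f : ℤ → ℤ) (hf : ∀ x, f x = x ^ p - a)
    (n : ℕ) (hn : 1 ≤ n) :
    padicValInt p (f^[n] 0) = 1 := by
  have hdvd : ∀ m, (p : ℤ) ∣ f^[m] 0 := by
    intro m
    induction m with
    | zero => exact dvd_zero _
    | succ m ih =>
      rw [Function.iterate_succ_apply', hf]
      exact dvd_pow_sub hp.ne_zero ih hpa
  obtain ⟨m, rfl⟩ := Nat.exists_eq_add_of_le' hn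
  rw [Function.iterate_succ_apply', hf]
  refine padicValInt_eq_of_dvd_of_not_dvd hp.ne_one ?_ (not_sq_dvd_pow_sub hp.two_le (hdvd m) hp2a)
  simpa using dvd_pow_sub hp.ne_zero (hdvd m) hpa
end

section
/- Let p be a prime, a an integer, and f(x) = x^p - a. If p ∣ a and p^2 ∤ a, then for every n ≥ 1 the n-fold composition f^n(x) is Eisenstein at p (every non-leading coefficient is divisible by p and the constant term is not divisible by p^2), hence f^n is irreducible over ℚ. -/
/-!
Modulo `p`, a monic polynomial is weakly Eisenstein exactly when it reduces to a power of `X`,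
so composing monic weakly Eisenstein polynomials keeps this property. For the constant term,
`g (f 0) ≡ g 0 [mod p²]` as soon as `p ∣ f 0` and `p ∣ g'(0)`, so `g ∘ f` inherits
`p² ∤ g 0` from an Eisenstein `g` of degree at least `2`. Starting from `X ^ p - a`, induction
makes every iterate Eisenstein, and Gauss's lemma passes irreducibility from `ℤ` to `ℚ`.
-/

open Polynomial

namespace Polynomial

variable {R : Type*} [CommRing R] {P : Ideal R} {f g : R[X]}

theorem Monic.isWeaklyEisensteinAt_iff_map_eq_X_pow (hf : f.Monic) :
    f.IsWeaklyEisensteinAt P ↔ f.map (Ideal.Quotient.mk P) = X ^ f.natDegree := by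
  constructor
  · intro hfP
    ext i
    rw [coeff_map, coeff_X_pow]
    rcases lt_trichotomy i f.natDegree with hi | rfl | hi
    · rw [if_neg hi.ne, Ideal.Quotient.eq_zero_iff_mem]
      exact hfP.mem hi
    · rw [if_pos rfl, hf.coeff_natDegree, map_one]
    · rw [if_neg hi.ne', coeff_eq_zero_of_natDegree_lt hi, map_zero]
  · intro hmap
    refine ⟨fun {i} hi ↦ ?_⟩
    have := congrArg (coeff · i) hmap
    simp only [coeff_map, coeff_X_pow, if_neg hi.ne] at this
    exact Ideal.Quotient.eq_zero_iff_mem.mp this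

theorem Monic.natDegree_comp [Nontrivial R] (hg : g.Monic) (hf : f.Monic) :
    (g.comp f).natDegree = g.natDegree * f.natDegree :=
  natDegree_comp_eq_of_mul_ne_zero (by simp [hg.leadingCoeff, hf.leadingCoeff])

theorem IsWeaklyEisensteinAt.comp_of_monic [Nontrivial R] (hgP : g.IsWeaklyEisensteinAt P)
    (hfP : f.IsWeaklyEisensteinAt P) (hg : g.Monic) (hf : f.Monic) (hfd : f.natDegree ≠ 0) :
    (g.comp f).IsWeaklyEisensteinAt P := by
  rw [(hg.comp hf hfd).isWeaklyEisensteinAt_iff_map_eq_X_pow, Polynomial.map_comp,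
    hg.isWeaklyEisensteinAt_iff_map_eq_X_pow.mp hgP,
    hf.isWeaklyEisensteinAt_iff_map_eq_X_pow.mp hfP, X_pow_comp, ← pow_mul,
    hg.natDegree_comp hf, mul_comm]

theorem eval_eq_coeff_zero_add_mul_eval_divX (g : R[X]) (c : R) :
    g.eval c = g.coeff 0 + c * g.divX.eval c := by
  conv_lhs => rw [← X_mul_divX_add g]
  rw [eval_add, eval_mul, eval_X, eval_C, add_comm]

theorem eval_sub_coeff_zero_mem_pow_two {c : R} (hc : c ∈ P) (h1 : g.coeff 1 ∈ P) :
    g.eval c - g.coeff 0 ∈ P ^ 2 := by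
  rw [eval_eq_coeff_zero_add_mul_eval_divX g, add_sub_cancel_left, pow_two]
  refine Ideal.mul_mem_mul hc ?_
  rw [eval_eq_coeff_zero_add_mul_eval_divX, coeff_divX, zero_add]
  exact P.add_mem h1 (P.mul_mem_right _ hc)

theorem IsEisensteinAt.comp_of_monic (hgP : g.IsEisensteinAt P) (hfP : f.IsWeaklyEisensteinAt P)
    (hg : g.Monic) (hf : f.Monic) (hgd : 1 < g.natDegree) (hfd : f.natDegree ≠ 0) :
    (g.comp f).IsEisensteinAt P := by
  have hP : P ≠ ⊤ := fun h ↦ hgP.leading (h ▸ Submodule.mem_top)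
  have : Nontrivial R := ⟨⟨g.leadingCoeff, 0, fun h ↦ hgP.leading (h ▸ P.zero_mem)⟩⟩
  refine (hg.comp hf hfd).isEisensteinAt_of_mem_of_notMem hP
    (hgP.isWeaklyEisensteinAt.comp_of_monic hfP hg hf hfd).mem fun hmem ↦ hgP.notMem ?_
  rw [coeff_zero_eq_eval_zero, eval_comp, ← coeff_zero_eq_eval_zero] at hmem
  have hsub := eval_sub_coeff_zero_mem_pow_two (hfP.mem (Nat.pos_of_ne_zero hfd)) (hgP.mem hgd)
  simpa using (P ^ 2).sub_mem hmem hsub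

theorem isWeaklyEisensteinAt_X_pow_sub_C {k : ℕ} {a : R} (ha : a ∈ P) :
    (X ^ k - C a).IsWeaklyEisensteinAt P := by
  refine ⟨fun {i} hi ↦ ?_⟩
  have hik : i ≠ k := (hi.trans_le ((natDegree_sub_le _ _).trans
    (max_le (natDegree_X_pow_le k) ((natDegree_C a).trans_le k.zero_le)))).ne
  rw [coeff_sub, coeff_X_pow, if_neg hik, coeff_C, zero_sub]
  split_ifs
  · exact P.neg_mem ha
  · exact P.neg_mem P.zero_mem

theorem isEisensteinAt_X_pow_sub_C {k : ℕ} {a : R} (hk : k ≠ 0) (ha : a ∈ P) (ha2 : a ∉ P ^ 2) :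
    (X ^ k - C a).IsEisensteinAt P := by
  have hP : P ≠ ⊤ := fun h ↦ ha2 (by simp [h, Ideal.top_pow])
  refine (monic_X_pow_sub_C a hk).isEisensteinAt_of_mem_of_notMem hP
    (isWeaklyEisensteinAt_X_pow_sub_C ha).mem ?_
  simpa [coeff_X_pow, hk.symm] using ha2

end Polynomial

theorem stmt6 (p : ℕ) (hp : p.Prime) (a : ℤ) (hpa : (p : ℤ) ∣ a)
    (hp2a : ¬ ((p : ℤ) ^ 2 ∣ a))
    (f : ℤ[X]) (hf : f = X ^ p - C a)
    (fn : ℕ → ℤ[X]) (hfn1 : fn 1 = f)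
    (hfns : ∀ n, 1 ≤ n → fn (n + 1) = (fn n).comp f)
    (n : ℕ) (hn : 1 ≤ n) :
    (fn n).IsEisensteinAt (Ideal.span {(p : ℤ)}) ∧
      Irreducible ((fn n).map (Int.castRingHom ℚ)) := by
  set P := Ideal.span {(p : ℤ)}
  have haP : a ∈ P := Ideal.mem_span_singleton.mpr hpa
  have ha2 : a ∉ P ^ 2 := by rwa [Ideal.span_singleton_pow, Ideal.mem_span_singleton]
  have hfP : f.IsEisensteinAt P := hf ▸ isEisensteinAt_X_pow_sub_C hp.ne_zero haP ha2
  have hfm : f.Monic := hf ▸ monic_X_pow_sub_C a hp.ne_zero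
  have hfd : f.natDegree = p := hf ▸ natDegree_X_pow_sub_C
  have key : ∀ m, 1 ≤ m → (fn m).Monic ∧ (fn m).IsEisensteinAt P ∧ 1 < (fn m).natDegree := by
    intro m hm
    induction m, hm using Nat.le_induction with
    | base => rw [hfn1, hfd]; exact ⟨hfm, hfP, hp.one_lt⟩
    | succ m hm ih =>
      obtain ⟨hgm, hgP, hgd⟩ := ih
      have hfd0 : f.natDegree ≠ 0 := hfd ▸ hp.ne_zero
      rw [hfns m hm, hgm.natDegree_comp hfm, hfd]
      exact ⟨hgm.comp hfm hfd0, hgP.comp_of_monic hfP.isWeaklyEisensteinAt hgm hfm hgd hfd0,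
        one_lt_mul_of_lt_of_le hgd hp.one_lt.le⟩
  obtain ⟨hmonic, hEis, hdeg⟩ := key n hn
  have hprime : P.IsPrime := (Ideal.span_singleton_prime (by exact_mod_cast hp.ne_zero)).mpr
    (Nat.prime_iff_prime_int.mp hp)
  exact ⟨hEis, (IsPrimitive.Int.irreducible_iff_irreducible_map_cast hmonic.isPrimitive).mp
    (hEis.irreducible hprime hmonic.isPrimitive (by omega))⟩
end

section
/- The discriminant of the polynomial x^n - a over a field (or over ℤ) equals (-1)^((n^2-n)/2) · n^n · (-a)^(n-1). -/
open Polynomial Finset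

/-! Pairing `r i - r j` with `r j - r i` turns the discriminant, up to the sign
`(-1) ^ (n choose 2)`, into `∏ i, ∏ j ≠ i, (r i - r j) = ∏ i, p' (r i)`.
For `p = X ^ n - a` this is `∏ i, n * r i ^ (n - 1)`, and `∏ i, r i = (-1) ^ n * (-a)`
is read off from `p 0`. -/

theorem Finset.sum_card_Ioi_eq_choose_two {ι : Type*} [Fintype ι] [LinearOrder ι]
    [LocallyFiniteOrderTop ι] :
    ∑ i : ι, #(Ioi i) = (Fintype.card ι).choose 2 := by
  classical
  rw [← Fintype.card_product_filter_lt, card_filter, ← univ_product_univ, sum_product]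
  refine sum_congr rfl fun i _ => ?_
  rw [← card_filter, filter_lt_eq_Ioi]

theorem Finset.prod_prod_Ioi_sub_sq {R ι : Type*} [CommRing R] [Fintype ι] [LinearOrder ι]
    [LocallyFiniteOrderTop ι] [LocallyFiniteOrderBot ι] (r : ι → R) :
    ∏ i, ∏ j ∈ Ioi i, (r i - r j) ^ 2 =
      (-1) ^ (Fintype.card ι).choose 2 * ∏ i, ∏ j ∈ {i}ᶜ, (r i - r j) := by
  rw [← prod_prod_Ioi_mul_eq_prod_prod_off_diag (fun j i => r i - r j),
    ← sum_card_Ioi_eq_choose_two, ← prod_pow_eq_pow_sum, ← prod_mul_distrib]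
  refine prod_congr rfl fun i _ => ?_
  rw [← prod_const, ← prod_mul_distrib]
  exact prod_congr rfl fun j _ => by ring

theorem Polynomial.eval_derivative_prod_X_sub_C {R ι : Type*} [CommRing R] [DecidableEq ι]
    {s : Finset ι} (r : ι → R) {k : ι} (hk : k ∈ s) :
    eval (r k) (derivative (∏ i ∈ s, (X - C (r i)))) = ∏ j ∈ s.erase k, (r k - r j) := by
  rw [← mul_prod_erase s _ hk, derivative_mul]
  simp [eval_prod]

theorem prod_eq_of_X_pow_sub_C_eq_prod {R : Type*} [CommRing R] {n : ℕ} (hn : n ≠ 0) {a : R}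
    {r : Fin n → R} (hr : (X ^ n - C a : R[X]) = ∏ i, (X - C (r i))) :
    ∏ i, r i = (-1) ^ n * -a := by
  have h0 := congrArg (eval 0) hr
  simp only [eval_sub, eval_pow, eval_X, eval_C, zero_pow hn, zero_sub, eval_prod,
    prod_neg, card_univ, Fintype.card_fin] at h0
  rw [h0, ← mul_assoc, ← pow_add, Even.neg_one_pow ⟨n, rfl⟩, one_mul]

theorem prod_prod_sub_of_X_pow_sub_C_eq_prod {R : Type*} [CommRing R] {n : ℕ} (hn : n ≠ 0)
    {a : R} {r : Fin n → R} (hr : (X ^ n - C a : R[X]) = ∏ i, (X - C (r i))) :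
    ∏ i, ∏ j ∈ {i}ᶜ, (r i - r j) = (n : R) ^ n * (-a) ^ (n - 1) :=
  calc ∏ i, ∏ j ∈ {i}ᶜ, (r i - r j)
      = ∏ i, eval (r i) (derivative (X ^ n - C a)) := by
        simp only [hr, eval_derivative_prod_X_sub_C r (mem_univ _), compl_singleton]
    _ = (n : R) ^ n * (∏ i, r i) ^ (n - 1) := by
        simp [derivative_X_pow, prod_mul_distrib, prod_pow]
    _ = (n : R) ^ n * (-a) ^ (n - 1) := by
        rw [prod_eq_of_X_pow_sub_C_eq_prod hn hr, mul_pow, ← pow_mul,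
          (Nat.even_mul_pred_self n).neg_one_pow, one_mul]

/-- The discriminant of the monic polynomial `X ^ n - C a`, expressed via its roots
`r 0, …, r (n-1)` in a splitting field, equals
`(-1) ^ ((n ^ 2 - n) / 2) * n ^ n * (-a) ^ (n - 1)`. -/
theorem stmt10 (K : Type*) [Field K] (n : ℕ) (hn : 2 ≤ n) (a : K)
    (r : Fin n → K) (hr : (X ^ n - C a : K[X]) = ∏ i, (X - C (r i))) :
    (∏ i : Fin n, ∏ j ∈ Finset.univ.filter (fun j => i < j), (r i - r j) ^ 2) =
      (-1 : K) ^ ((n ^ 2 - n) / 2) * (n : K) ^ n * (-a) ^ (n - 1) := by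
  have hsign : (n ^ 2 - n) / 2 = n.choose 2 := by
    rw [Nat.choose_two_right, sq, Nat.mul_sub_one]
  simp only [filter_lt_eq_Ioi, prod_prod_Ioi_sub_sq, Fintype.card_fin, hsign, mul_assoc,
    prod_prod_sub_of_X_pow_sub_C_eq_prod (by omega) hr]
end

section
/- Let p be a prime and a an integer such that a^p ≢ a (mod p^2). If p ∤ a, then writing a^p - a = p·u, the integer u is not divisible by p; moreover for every m ≥ 1, a^(p^m) - a = p·u_m with p ∤ u_m. -/
/-! Modulo `p` every power `a ^ p ^ k` is congruent to `a` (Fermat), so raising to the `p`-th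
power gives `a ^ p ^ (k + 1) ≡ a ^ p [ZMOD p ^ 2]`. Hence `a ^ p ^ m - a ≡ a ^ p - a` modulo `p ^ 2`
for every `m ≥ 1`. -/

namespace Int

variable {p : ℕ}

theorem prime_dvd_pow_prime_pow_sub_self (hp : p.Prime) (n : ℤ) (k : ℕ) :
    (p : ℤ) ∣ n ^ p ^ k - n := by
  have : Fact p.Prime := ⟨hp⟩
  rw [← ZMod.intCast_eq_intCast_iff_dvd_sub, Int.cast_pow, ZMod.pow_card_pow]

theorem sq_dvd_pow_prime_pow_succ_sub_pow_prime (hp : p.Prime) (n : ℤ) (k : ℕ) :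
    (p : ℤ) ^ 2 ∣ n ^ p ^ (k + 1) - n ^ p := by
  rw [pow_succ p k, pow_mul]
  simpa using dvd_sub_pow_of_dvd_sub (prime_dvd_pow_prime_pow_sub_self hp n k) 1

theorem sq_dvd_pow_prime_pow_sub_self_iff (hp : p.Prime) (n : ℤ) {m : ℕ} (hm : 1 ≤ m) :
    (p : ℤ) ^ 2 ∣ n ^ p ^ m - n ↔ (p : ℤ) ^ 2 ∣ n ^ p - n := by
  obtain ⟨k, rfl⟩ := Nat.exists_eq_add_of_le' hm
  rw [show n ^ p ^ (k + 1) - n = (n ^ p ^ (k + 1) - n ^ p) + (n ^ p - n) by ring,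
    dvd_add_right (sq_dvd_pow_prime_pow_succ_sub_pow_prime hp n k)]

end Int

theorem stmt13_general (p : ℕ) (hp : p.Prime) (a : ℤ)
    (hW : ¬ ((p : ℤ) ^ 2 ∣ a ^ p - a)) (m : ℕ) (hm : 1 ≤ m) :
    (p : ℤ) ∣ a ^ (p ^ m) - a ∧ ¬ ((p : ℤ) ^ 2 ∣ a ^ (p ^ m) - a) :=
  ⟨Int.prime_dvd_pow_prime_pow_sub_self hp a m,
    (Int.sq_dvd_pow_prime_pow_sub_self_iff hp a hm).not.mpr hW⟩

theorem stmt13 (p : ℕ) (hp : p.Prime) (a : ℤ) (ha : ¬ (p : ℤ) ∣ a)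
    (hW : ¬ ((p : ℤ) ^ 2 ∣ a ^ p - a)) (m : ℕ) (hm : 1 ≤ m) :
    (p : ℤ) ∣ a ^ (p ^ m) - a ∧ ¬ ((p : ℤ) ^ 2 ∣ a ^ (p ^ m) - a) :=
  stmt13_general p hp a hW m hm
end
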